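/- (Invertibility of the Schur complement and the quadratic-form bound from the proofs of Theorems 2.1 and 3.1.) Suppose a, b ≥ 0 satisfy ‖B*x‖² ≤ a·Re⟨Ax, x⟩ + b·‖x‖² for all x ∈ H₁. Let λ ∈ ℝ with λ ∉ σ(A) and λ ∉ σ(C), and set δ = a / dist[λ, σ(C)] + |aλ + b| / ( dist[λ, σ(A)] · dist[λ, σ(C)] ). If δ < 1, then the Schur complement S(λ) = A − λI − B(C − λI)⁻¹B* is boundedly invertible, and for every x ∈ H₁, Re⟨S(λ)⁻¹x, x⟩ ≤ (1 − δ)⁻¹ · ‖ |A − λI|^{-1/2} x ‖², where |A − λI|^{-1/2} is obtained by applying the continuous functional calculus of A to the function t ↦ |t − λ|^{-1/2}. -/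

import Mathlib

/-!
With `R = |A - λ|^{-1/2}` and the self-adjoint involution `G = sign (A - λ)`, the functional
calculus of `A` factors `A - λ = R⁻¹ G R⁻¹`, hence `S(λ) = R⁻¹ (G - K) R⁻¹` with
`K = (B* R)* (C - λ)⁻¹ (B* R)`. The form bound on `B*`, evaluated at `x = R y`, gives
`‖B* R‖² ≤ a + |aλ + b| / dist(λ, σ(A))`, and `‖(C - λ)⁻¹‖ = 1 / dist(λ, σ(C))`, so `‖K‖ ≤ δ < 1`.
Then `G - K = G (1 - G K)` is invertible with `‖(G - K)⁻¹‖ ≤ (1 - δ)⁻¹`, and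
`⟪S(λ)⁻¹ x, x⟫ = ⟪(G - K)⁻¹ R x, R x⟫`.
-/

open ContinuousLinearMap

variable {H₁ H₂ : Type*}
  [NormedAddCommGroup H₁] [InnerProductSpace ℂ H₁] [CompleteSpace H₁]
  [NormedAddCommGroup H₂] [InnerProductSpace ℂ H₂] [CompleteSpace H₂]

/-- The first Schur complement `S(λ) = A - λ I - B (C - λ I)⁻¹ B*` (for `λ ∉ σ(C)`;
`Ring.inverse` is junk otherwise). -/
noncomputable def schurC (A : H₁ →L[ℂ] H₁) (B : H₂ →L[ℂ] H₁) (C : H₂ →L[ℂ] H₂)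
    (lam : ℂ) : H₁ →L[ℂ] H₁ :=
  A - lam • 1 - B ∘L (Ring.inverse (C - lam • 1)) ∘L (ContinuousLinearMap.adjoint B)

open Metric
open scoped Ring

section NormedRing

variable {R : Type*} [NormedRing R] [HasSummableGeomSeries R]

theorem isUnit_sub_and_norm_inverse_le_of_mul_self_eq_one {g k : R} (hg : g * g = 1)
    (hg₁ : ‖g‖ ≤ 1) {δ : ℝ} (hk : ‖k‖ ≤ δ) (hδ : δ < 1) :
    IsUnit (g - k) ∧ ‖(g - k)⁻¹ʳ‖ ≤ (1 - δ)⁻¹ := by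
  have hδ₀ : 0 ≤ δ := (norm_nonneg k).trans hk
  have hgk : ‖g * k‖ ≤ δ :=
    (norm_mul_le g k).trans (by nlinarith [norm_nonneg g, norm_nonneg k])
  have hunit : IsUnit (g - k) := by
    have hfac : g - k = g * (1 - g * k) := by rw [mul_sub, mul_one, ← mul_assoc, hg, one_mul]
    rw [hfac]
    exact IsUnit.mul ⟨⟨g, g, hg, hg⟩, rfl⟩ (isUnit_one_sub_of_norm_lt_one (hgk.trans_lt hδ))
  refine ⟨hunit, ?_⟩
  set v := (g - k)⁻¹ʳ
  have hv : v = g + v * k * g := by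
    have h := Ring.inverse_mul_cancel _ hunit
    calc v = v * (g * g) := by rw [hg, mul_one]
      _ = (v * (g - k) + v * k) * g := by noncomm_ring
      _ = g + v * k * g := by rw [h]; noncomm_ring
  have hvk : ‖v * k * g‖ ≤ ‖v‖ * δ :=
    calc ‖v * k * g‖ ≤ ‖v‖ * ‖k‖ * ‖g‖ := norm_mul₃_le
      _ ≤ ‖v‖ * δ * 1 := by gcongr
      _ = ‖v‖ * δ := mul_one _
  have : ‖v‖ ≤ 1 + ‖v‖ * δ := by
    calc ‖v‖ ≤ ‖g‖ + ‖v * k * g‖ := (congrArg norm hv).trans_le (norm_add_le _ _)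
      _ ≤ 1 + ‖v‖ * δ := add_le_add hg₁ hvk
  rw [← one_div, le_div_iff₀ (by linarith)]
  linarith

end NormedRing

lemma IsClosed.infDist_pos_and_le_abs_sub {s : Set ℝ} (hs : IsClosed s) {r t : ℝ} (hr : r ∉ s)
    (ht : t ∈ s) : 0 < infDist r s ∧ infDist r s ≤ |t - r| :=
  ⟨(hs.notMem_iff_infDist_pos ⟨t, ht⟩).mp hr,
    by simpa [Real.dist_eq, abs_sub_comm] using infDist_le_dist_of_mem (x := r) ht⟩

lemma sub_ne_zero_of_mem_of_notMem {s : Set ℝ} {r t : ℝ} (hr : r ∉ s) (ht : t ∈ s) :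
    t - r ≠ 0 :=
  sub_ne_zero.mpr fun h => hr (h ▸ ht)

lemma continuousOn_sign_sub {s : Set ℝ} {r : ℝ} (hr : r ∉ s) :
    ContinuousOn (fun t : ℝ => (t - r) / |t - r|) s :=
  ContinuousOn.div (by fun_prop) (by fun_prop) fun _ ht =>
    abs_ne_zero.mpr (sub_ne_zero_of_mem_of_notMem hr ht)

section SelfAdjoint

variable {𝒜 : Type*} [CStarAlgebra 𝒜] {a : 𝒜} {r : ℝ}

lemma cfc_id_sub_const (ha : IsSelfAdjoint a) :
    cfc (fun t : ℝ => t - r) a = a - algebraMap ℝ 𝒜 r := by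
  rw [cfc_sub _ _ a, cfc_id' ℝ a, cfc_const r a]

lemma inverse_sub_algebraMap_eq_cfc (ha : IsSelfAdjoint a) (hr : r ∉ spectrum ℝ a) :
    (a - algebraMap ℝ 𝒜 r)⁻¹ʳ = cfc (fun t : ℝ => (t - r)⁻¹) a := by
  rw [cfc_inv (fun t : ℝ => t - r) a fun t ht => sub_ne_zero_of_mem_of_notMem hr ht,
    cfc_id_sub_const ha]

lemma norm_inverse_sub_algebraMap_le (ha : IsSelfAdjoint a) (hr : r ∉ spectrum ℝ a) :
    ‖(a - algebraMap ℝ 𝒜 r)⁻¹ʳ‖ ≤ (infDist r (spectrum ℝ a))⁻¹ := by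
  rw [inverse_sub_algebraMap_eq_cfc ha hr]
  refine norm_cfc_le (inv_nonneg.mpr infDist_nonneg) fun t ht => ?_
  obtain ⟨hpos, hle⟩ := (spectrum.isClosed a).infDist_pos_and_le_abs_sub hr ht
  rw [norm_inv, Real.norm_eq_abs]
  exact inv_anti₀ hpos hle

lemma sq_norm_cfc_inv_sqrt_abs_sub_le (hr : r ∉ spectrum ℝ a) :
    ‖cfc (fun t : ℝ => (√|t - r|)⁻¹) a‖ ^ 2 ≤ (infDist r (spectrum ℝ a))⁻¹ := by
  have h : ‖cfc (fun t : ℝ => (√|t - r|)⁻¹) a‖ ≤ (√(infDist r (spectrum ℝ a)))⁻¹ := by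
    refine norm_cfc_le (by positivity) fun t ht => ?_
    obtain ⟨hpos, hle⟩ := (spectrum.isClosed a).infDist_pos_and_le_abs_sub hr ht
    rw [norm_inv, Real.norm_of_nonneg (Real.sqrt_nonneg _)]
    exact inv_anti₀ (Real.sqrt_pos.mpr hpos) (Real.sqrt_le_sqrt hle)
  calc _ ≤ ((√(infDist r (spectrum ℝ a)))⁻¹) ^ 2 := by gcongr
    _ = _ := by rw [inv_pow, Real.sq_sqrt infDist_nonneg]

lemma norm_cfc_sign_sub_le_one : ‖cfc (fun t : ℝ => (t - r) / |t - r|) a‖ ≤ 1 :=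
  norm_cfc_le zero_le_one fun t _ => by
    rw [Real.norm_eq_abs, abs_div, abs_abs]
    exact div_self_le_one _

lemma cfc_sign_sub_mul_self (ha : IsSelfAdjoint a) (hr : r ∉ spectrum ℝ a) :
    cfc (fun t : ℝ => (t - r) / |t - r|) a * cfc (fun t : ℝ => (t - r) / |t - r|) a = 1 := by
  have hcont := continuousOn_sign_sub hr
  rw [← cfc_mul _ _ a, ← cfc_one ℝ a]
  refine cfc_congr fun t ht => ?_
  have h := sub_ne_zero_of_mem_of_notMem hr ht
  rw [div_mul_div_comm, ← abs_mul, abs_mul_self, div_self (mul_ne_zero h h), Pi.one_apply]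

lemma cfc_sqrt_abs_sub_mul_sign_mul (ha : IsSelfAdjoint a) (hr : r ∉ spectrum ℝ a) :
    cfc (fun t : ℝ => √|t - r|) a * cfc (fun t : ℝ => (t - r) / |t - r|) a *
      cfc (fun t : ℝ => √|t - r|) a = a - algebraMap ℝ 𝒜 r := by
  have hcont := continuousOn_sign_sub hr
  rw [← cfc_mul _ _ a, ← cfc_mul _ _ a, ← cfc_id_sub_const ha]
  refine cfc_congr fun t ht => ?_
  have h := abs_ne_zero.mpr (sub_ne_zero_of_mem_of_notMem hr ht)
  have hs := Real.mul_self_sqrt (abs_nonneg (t - r))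
  field_simp
  linear_combination (t - r) * hs

end SelfAdjoint

section InnerProduct

variable {E : Type*} [NormedAddCommGroup E] [InnerProductSpace ℂ E]

lemma re_inner_apply_self_le (T : E →L[ℂ] E) (x : E) :
    (inner ℂ (T x) x).re ≤ ‖T‖ * ‖x‖ ^ 2 :=
  calc (inner ℂ (T x) x).re ≤ ‖T x‖ * ‖x‖ := by simpa using re_inner_le_norm (𝕜 := ℂ) (T x) x
    _ ≤ ‖T‖ * ‖x‖ * ‖x‖ := by gcongr; exact T.le_opNorm x
    _ = ‖T‖ * ‖x‖ ^ 2 := by ring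

lemma re_inner_sub_algebraMap_apply_self (A : E →L[ℂ] E) (r : ℝ) (x : E) :
    (inner ℂ ((A - algebraMap ℝ _ r) x) x).re = (inner ℂ (A x) x).re - r * ‖x‖ ^ 2 := by
  simp [Algebra.algebraMap_eq_smul_one, ← Complex.ofReal_pow]

lemma isUnit_conj_and_re_inner_inverse_le [CompleteSpace E] {U : (E →L[ℂ] E)ˣ}
    (hU : IsSelfAdjoint (↑U⁻¹ : E →L[ℂ] E)) {T : E →L[ℂ] E} (hT : IsUnit T) {c : ℝ}
    (hc : ‖T⁻¹ʳ‖ ≤ c) :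
    IsUnit (U * T * U : E →L[ℂ] E) ∧
      ∀ x, (inner ℂ ((U * T * U : E →L[ℂ] E)⁻¹ʳ x) x).re ≤ c * ‖(↑U⁻¹ : E →L[ℂ] E) x‖ ^ 2 := by
  refine ⟨(U.isUnit.mul hT).mul U.isUnit, fun x => ?_⟩
  rw [Ring.inverse_mul (.inr U.isUnit), Ring.inverse_mul (.inl U.isUnit), Ring.inverse_unit]
  calc _ = (inner ℂ (T⁻¹ʳ ((↑U⁻¹ : E →L[ℂ] E) x)) ((↑U⁻¹ : E →L[ℂ] E) x)).re :=
        congrArg Complex.re (hU.isSymmetric _ _)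
    _ ≤ c * ‖(↑U⁻¹ : E →L[ℂ] E) x‖ ^ 2 := (re_inner_apply_self_le _ _).trans
          (mul_le_mul_of_nonneg_right hc (sq_nonneg _))

end InnerProduct

lemma schurC_ofReal (A : H₁ →L[ℂ] H₁) (B : H₂ →L[ℂ] H₁) (C : H₂ →L[ℂ] H₂) (r : ℝ) :
    schurC A B C r =
      A - algebraMap ℝ _ r - B ∘L (C - algebraMap ℝ _ r)⁻¹ʳ ∘L adjoint B := by
  simp only [schurC, Algebra.algebraMap_eq_smul_one, Complex.coe_smul]

lemma schurC_eq_conj {A : H₁ →L[ℂ] H₁} (B : H₂ →L[ℂ] H₁) (C : H₂ →L[ℂ] H₂) {r : ℝ}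
    {U : (H₁ →L[ℂ] H₁)ˣ} {G : H₁ →L[ℂ] H₁} (hU : IsSelfAdjoint (↑U⁻¹ : H₁ →L[ℂ] H₁))
    (hAU : A - algebraMap ℝ _ r = U * G * U) :
    schurC A B C r = (U : H₁ →L[ℂ] H₁) *
      (G - adjoint (adjoint B ∘L ↑U⁻¹) ∘L (C - algebraMap ℝ _ r)⁻¹ʳ ∘L (adjoint B ∘L ↑U⁻¹)) *
      (U : H₁ →L[ℂ] H₁) := by
  have hUR (z : H₁) : (U : H₁ →L[ℂ] H₁) ((↑U⁻¹ : H₁ →L[ℂ] H₁) z) = z :=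
    DFunLike.congr_fun U.mul_inv z
  have hRU (z : H₁) : (↑U⁻¹ : H₁ →L[ℂ] H₁) ((U : H₁ →L[ℂ] H₁) z) = z :=
    DFunLike.congr_fun U.inv_mul z
  rw [schurC_ofReal, mul_sub, sub_mul, hAU]
  congr 1
  ext y
  simp [adjoint_comp, hU.adjoint_eq, hUR, hRU]

lemma opNorm_sq_le_of_forall_sq_le {𝕜 E F : Type*} [NontriviallyNormedField 𝕜]
    [SeminormedAddCommGroup E] [SeminormedAddCommGroup F] [NormedSpace 𝕜 E] [NormedSpace 𝕜 F]
    (T : E →L[𝕜] F) {c : ℝ} (hc : 0 ≤ c)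
    (h : ∀ x, ‖T x‖ ^ 2 ≤ c * ‖x‖ ^ 2) : ‖T‖ ^ 2 ≤ c := by
  refine (Real.le_sqrt (norm_nonneg _) hc).mp (T.opNorm_le_bound (Real.sqrt_nonneg c) fun x => ?_)
  rw [← Real.sqrt_sq (norm_nonneg x), ← Real.sqrt_mul hc]
  exact Real.le_sqrt_of_sq_le (h x)

lemma norm_adjoint_comp_comp_le (X : H₁ →L[ℂ] H₂) (Y : H₂ →L[ℂ] H₂) :
    ‖adjoint X ∘L Y ∘L X‖ ≤ ‖X‖ ^ 2 * ‖Y‖ :=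
  calc ‖adjoint X ∘L Y ∘L X‖ ≤ ‖adjoint X‖ * (‖Y‖ * ‖X‖) :=
        (opNorm_comp_le _ _).trans (by gcongr; exact opNorm_comp_le _ _)
    _ = ‖X‖ ^ 2 * ‖Y‖ := by rw [adjoint.norm_map]; ring

lemma sq_norm_adjoint_comp_le {A R G : H₁ →L[ℂ] H₁} {B : H₂ →L[ℂ] H₁} {a b r d : ℝ} (ha : 0 ≤ a)
    (hab : ∀ x : H₁, ‖adjoint B x‖ ^ 2 ≤ a * (inner ℂ (A x) x).re + b * ‖x‖ ^ 2)
    (hR : IsSelfAdjoint R) (hRAR : R * (A - algebraMap ℝ _ r) * R = G) (hG : ‖G‖ ≤ 1)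
    (hRd : ‖R‖ ^ 2 ≤ d) :
    ‖adjoint B ∘L R‖ ^ 2 ≤ a + |a * r + b| * d := by
  have hd : 0 ≤ d := (sq_nonneg _).trans hRd
  refine opNorm_sq_le_of_forall_sq_le _ (by positivity) fun y => ?_
  have hGy : inner ℂ ((A - algebraMap ℝ _ r) (R y)) (R y) = inner ℂ (G y) y := by
    rw [← hRAR]
    exact (hR.isSymmetric _ y).symm
  have hRy : ‖R y‖ ^ 2 ≤ d * ‖y‖ ^ 2 :=
    calc ‖R y‖ ^ 2 ≤ (‖R‖ * ‖y‖) ^ 2 := by gcongr; exact R.le_opNorm y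
      _ ≤ d * ‖y‖ ^ 2 := by rw [mul_pow]; gcongr
  have hAy := re_inner_sub_algebraMap_apply_self A r (R y)
  rw [hGy] at hAy
  calc ‖adjoint B (R y)‖ ^ 2 ≤ a * (inner ℂ (A (R y)) (R y)).re + b * ‖R y‖ ^ 2 := hab (R y)
    _ = a * (inner ℂ (G y) y).re + (a * r + b) * ‖R y‖ ^ 2 := by rw [hAy]; ring
    _ ≤ a * (1 * ‖y‖ ^ 2) + |a * r + b| * (d * ‖y‖ ^ 2) := by
        gcongr
        · exact (re_inner_apply_self_le G y).trans (by gcongr)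
        · exact le_abs_self _
    _ = (a + |a * r + b| * d) * ‖y‖ ^ 2 := by ring

theorem schur_invertible_and_form_bound_general
    (A : H₁ →L[ℂ] H₁) (hA : IsSelfAdjoint A)
    (C : H₂ →L[ℂ] H₂) (hC : IsSelfAdjoint C) (B : H₂ →L[ℂ] H₁)
    (a b : ℝ) (ha : 0 ≤ a)
    (hab : ∀ x : H₁, ‖ContinuousLinearMap.adjoint B x‖ ^ 2 ≤
      a * (inner ℂ (A x) x : ℂ).re + b * ‖x‖ ^ 2)
    (lam : ℝ) (hlamA : lam ∉ spectrum ℝ A) (hlamC : lam ∉ spectrum ℝ C)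
    (δ : ℝ)
    (hδdef : δ = a / Metric.infDist lam (spectrum ℝ C) +
      |a * lam + b| / (Metric.infDist lam (spectrum ℝ A) * Metric.infDist lam (spectrum ℝ C)))
    (hδ : δ < 1) :
    IsUnit (schurC A B C (lam : ℂ)) ∧
    ∀ x : H₁, (inner ℂ (Ring.inverse (schurC A B C (lam : ℂ)) x) x : ℂ).re ≤
      (1 - δ)⁻¹ * ‖cfc (fun t : ℝ => (Real.sqrt |t - lam|)⁻¹) A x‖ ^ 2 := by
  set U := cfcUnits (fun t : ℝ => √|t - lam|) A
    fun t ht => by simpa using sub_ne_zero_of_mem_of_notMem hlamA ht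
  set R := ((U⁻¹ : (H₁ →L[ℂ] H₁)ˣ) : H₁ →L[ℂ] H₁)
  set G := cfc (fun t : ℝ => (t - lam) / |t - lam|) A
  set K := adjoint (adjoint B ∘L R) ∘L (C - algebraMap ℝ _ lam)⁻¹ʳ ∘L (adjoint B ∘L R)
  have hR : IsSelfAdjoint R := cfc_predicate _ A
  have hAU : A - algebraMap ℝ _ lam = U * G * U := (cfc_sqrt_abs_sub_mul_sign_mul hA hlamA).symm
  have hRAR : R * (A - algebraMap ℝ _ lam) * R = G := by
    simp only [hAU, R, mul_assoc, Units.inv_mul_cancel_left, Units.mul_inv, mul_one]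
  have hBR := sq_norm_adjoint_comp_le ha hab hR hRAR norm_cfc_sign_sub_le_one
    (sq_norm_cfc_inv_sqrt_abs_sub_le hlamA)
  have hK : ‖K‖ ≤ δ :=
    calc ‖K‖ ≤ ‖adjoint B ∘L R‖ ^ 2 * ‖(C - algebraMap ℝ _ lam)⁻¹ʳ‖ :=
          norm_adjoint_comp_comp_le _ _
      _ ≤ (a + |a * lam + b| * (infDist lam (spectrum ℝ A))⁻¹) * (infDist lam (spectrum ℝ C))⁻¹ :=
          mul_le_mul hBR (norm_inverse_sub_algebraMap_le hC hlamC) (norm_nonneg _)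
            ((sq_nonneg _).trans hBR)
      _ = δ := by rw [hδdef]; ring
  obtain ⟨hunit, hnorm⟩ := isUnit_sub_and_norm_inverse_le_of_mul_self_eq_one
    (cfc_sign_sub_mul_self hA hlamA) norm_cfc_sign_sub_le_one hK hδ
  rw [schurC_eq_conj B C hR hAU]
  exact isUnit_conj_and_re_inner_inverse_le hR hunit hnorm

/-- Invertibility of the Schur complement and the quadratic-form bound
(from the proofs of Theorems 2.1 and 3.1). -/
theorem schur_invertible_and_form_bound
    (A : H₁ →L[ℂ] H₁) (hA : IsSelfAdjoint A)
    (C : H₂ →L[ℂ] H₂) (hC : IsSelfAdjoint C) (B : H₂ →L[ℂ] H₁)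
    (a b : ℝ) (ha : 0 ≤ a) (hb : 0 ≤ b)
    (hab : ∀ x : H₁, ‖ContinuousLinearMap.adjoint B x‖ ^ 2 ≤
      a * (inner ℂ (A x) x : ℂ).re + b * ‖x‖ ^ 2)
    (lam : ℝ) (hlamA : lam ∉ spectrum ℝ A) (hlamC : lam ∉ spectrum ℝ C)
    (δ : ℝ)
    (hδdef : δ = a / Metric.infDist lam (spectrum ℝ C) +
      |a * lam + b| / (Metric.infDist lam (spectrum ℝ A) * Metric.infDist lam (spectrum ℝ C)))
    (hδ : δ < 1) :
    IsUnit (schurC A B C (lam : ℂ)) ∧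
    ∀ x : H₁, (inner ℂ (Ring.inverse (schurC A B C (lam : ℂ)) x) x : ℂ).re ≤
      (1 - δ)⁻¹ * ‖cfc (fun t : ℝ => (Real.sqrt |t - lam|)⁻¹) A x‖ ^ 2 :=
  schur_invertible_and_form_bound_general A hA C hC B a b ha hab lam hlamA hlamC δ hδdef hδ
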